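/- Let C be a category in which a commutative square is a pullback square if and only if it is a pushout square; that is, for all objects W, X, Y, Z and morphisms f : W ⟶ X, g : W ⟶ Y, h : X ⟶ Z, k : Y ⟶ Z with h ∘ f = k ∘ g, the square is a pullback if and only if it is a pushout. Then every monomorphism in C is an isomorphism. -/
import Mathlib

open CategoryTheory

/-- In a category where a commutative square is a pullback iff it is a pushout,
every monomorphism is an isomorphism. -/
theorem mono_isIso_of_pullback_iff_pushout {C : Type*} [Category C]
    (H : ∀ {W X Y Z : C} (f : W ⟶ X) (g : W ⟶ Y) (h : X ⟶ Z) (k : Y ⟶ Z),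
      f ≫ h = g ≫ k → (IsPullback f g h k ↔ IsPushout f g h k)) :
    ∀ {X Y : C} (f : X ⟶ Y), Mono f → IsIso f := by
  intro X Y f hf
  have hpb : IsPullback (𝟙 X) (𝟙 X) f f := IsKernelPair.id_of_mono f
  have hpo : IsPushout (𝟙 X) (𝟙 X) f f := (H _ _ _ _ (by simp)).mp hpb
  refine ⟨hpo.desc (𝟙 X) (𝟙 X) rfl, ?_, ?_⟩
  · exact hpo.inl_desc (𝟙 X) (𝟙 X) rfl
  · apply hpo.hom_ext <;> simp [hpo.inl_desc]
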